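/- For the cycle graph Cₙ with vertex modules m_{v_j}ℤ and edge labels r₁,…,rₙ (rⱼ on edge v_jv_{j+1}, rₙ on edge v_nv_1), the smallest positive leading entry of a flow-up class F⁽¹⁾ = (f₁, f₂, …, fₙ) (no zero constraint, leading entry f₁) is f₁ = lcm over the two paths around the cycle of the nested gcd expressions: lcm(m_{v₁}, gcd(m_{v₂},r₁), gcd(m_{v₃},r₁,r₂), …, gcd(m_{vₙ},r₁,…,r_{n−1}), gcd(m_{vₙ},rₙ), gcd(m_{v_{n−1}},r_{n−1},rₙ), …, gcd(m_{v₂},r₂,…,rₙ)); i.e., an integer a can appear as the first coordinate of some spline on Cₙ if and only if this lcm divides a. -/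
import Mathlib

private lemma nat_gcd_lcm_distrib_dvd (a b c : ℕ) :
    Nat.gcd (Nat.lcm a b) c ∣ Nat.lcm (Nat.gcd a c) (Nat.gcd b c) := by
  rcases eq_or_ne a 0 with rfl | ha
  · simpa using Nat.dvd_lcm_left _ _
  rcases eq_or_ne b 0 with rfl | hb
  · simpa using Nat.dvd_lcm_right _ _
  rcases eq_or_ne c 0 with rfl | hc
  · simp
  have hl : Nat.lcm a b ≠ 0 := Nat.lcm_ne_zero ha hb
  have hg1 : Nat.gcd a c ≠ 0 := fun h => ha (Nat.eq_zero_of_gcd_eq_zero_left h)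
  have hg2 : Nat.gcd b c ≠ 0 := fun h => hb (Nat.eq_zero_of_gcd_eq_zero_left h)
  have hL : Nat.gcd (Nat.lcm a b) c ≠ 0 := fun h => hl (Nat.eq_zero_of_gcd_eq_zero_left h)
  have hR : Nat.lcm (Nat.gcd a c) (Nat.gcd b c) ≠ 0 := Nat.lcm_ne_zero hg1 hg2
  rw [← Nat.factorization_le_iff_dvd hL hR, Nat.factorization_gcd hl hc,
    Nat.factorization_lcm ha hb, Nat.factorization_lcm hg1 hg2,
    Nat.factorization_gcd ha hc, Nat.factorization_gcd hb hc]
  intro p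
  simp only [Finsupp.inf_apply, Finsupp.sup_apply]
  rcases le_total (a.factorization p) (b.factorization p) with h | h
  · rw [sup_eq_right.mpr h]
    exact le_sup_right
  · rw [sup_eq_left.mpr h]
    exact le_sup_left

private lemma int_gcd_lcm_dvd {a b c z : ℤ} (h1 : gcd a c ∣ z) (h2 : gcd b c ∣ z) :
    gcd (lcm a b) c ∣ z := by
  refine dvd_trans ?_ (lcm_dvd h1 h2)
  rw [← Int.coe_gcd, ← Int.coe_gcd, ← Int.coe_lcm, ← Int.coe_gcd, ← Int.coe_lcm,
    Int.natCast_dvd_natCast]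
  simpa [Int.gcd, Int.lcm] using nat_gcd_lcm_distrib_dvd a.natAbs b.natAbs c.natAbs

private lemma int_gcd_finset_lcm_dvd {β : Type*} {s : Finset β} {f : β → ℤ} {c z : ℤ}
    (h : ∀ i ∈ s, gcd (f i) c ∣ z) : gcd (s.lcm f) c ∣ z := by
  classical
  induction s using Finset.induction_on with
  | empty => simpa [Finset.lcm_empty] using one_dvd z
  | @insert i s hi ih =>
    rw [Finset.lcm_insert]
    exact int_gcd_lcm_dvd (h _ (Finset.mem_insert_self _ _))
      (ih fun j hj => h j (Finset.mem_insert_of_mem hj))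

private lemma crt2 (p q b c : ℤ) (h : gcd p q ∣ b - c) : ∃ x : ℤ, p ∣ x - b ∧ q ∣ x - c := by
  obtain ⟨t, ht⟩ := h
  refine ⟨b - p * Int.gcdA p q * t, ⟨-(Int.gcdA p q * t), by ring⟩, ⟨Int.gcdB p q * t, ?_⟩⟩
  have hb : (gcd p q : ℤ) = p * Int.gcdA p q + q * Int.gcdB p q := by
    rw [← Int.coe_gcd]; exact Int.gcd_eq_gcd_ab p q
  have hbc : b - c = (p * Int.gcdA p q + q * Int.gcdB p q) * t := by rw [← hb, ← ht]
  linarith [hbc]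

private lemma crt3 (p q s b c : ℤ) (h1 : gcd p q ∣ b) (h2 : gcd p s ∣ c)
    (h3 : gcd q s ∣ b - c) : ∃ x : ℤ, p ∣ x ∧ q ∣ x - b ∧ s ∣ x - c := by
  obtain ⟨y, hyp, hyq⟩ := crt2 p q 0 b (by simpa using dvd_neg.mpr h1)
  rw [sub_zero] at hyp
  have hys : gcd (lcm p q) s ∣ y - c := by
    apply int_gcd_lcm_dvd
    · exact dvd_sub ((gcd_dvd_left p s).trans hyp) h2
    · have ha : gcd q s ∣ y - b := (gcd_dvd_left q s).trans hyq
      have := dvd_add ha h3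
      simpa using this
  obtain ⟨x, hx1, hx2⟩ := crt2 (lcm p q) s y c hys
  refine ⟨x, ?_, ?_, hx2⟩
  · have hp : p ∣ x - y := (dvd_lcm_left p q).trans hx1
    simpa using dvd_add hp hyp
  · have hq : q ∣ x - y := (dvd_lcm_right p q).trans hx1
    have := dvd_add hq hyq
    simpa using this

/-- On the cycle `Cₙ` (vertices `0,…,n-1`, edge `j` between `j` and `j+1`, edge `n-1`
between `n-1` and `0`), an integer `a` occurs as the first coordinate of a spline iff it
is divisible by the lcm, over the two paths around the cycle, of the nested gcds
`gcd(m_k, r_0,…,r_{k-1})` (forward) and `gcd(m_t, r_t,…,r_{n-1})` (backward). -/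
theorem stmt_15 (n : ℕ) (hn : 3 ≤ n) (m r : ℕ → ℤ) (hr : ∀ j < n, r j ≠ 0) (a : ℤ) :
    (∃ f : ℕ → ℤ, f 0 = a ∧ (∀ j < n, m j ∣ f j) ∧
      (∀ j, j + 1 < n → r j ∣ f j - f (j + 1)) ∧ r (n - 1) ∣ f (n - 1) - f 0) ↔
    lcm ((Finset.range n).lcm (fun k => gcd (m k) ((Finset.range k).gcd r)))
      ((Finset.Ico 1 n).lcm (fun t => gcd (m t) ((Finset.Ico t n).gcd r))) ∣ a := by
  have hsing : Finset.Ico (n-1) n = {n-1} := by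
    ext i; simp only [Finset.mem_Ico, Finset.mem_singleton]; omega
  constructor
  · rintro ⟨f, hf0, hm, he, hw⟩
    apply lcm_dvd
    · apply Finset.lcm_dvd
      intro k hk
      rw [Finset.mem_range] at hk
      have C1 : ∀ k, k < n → (Finset.range k).gcd r ∣ f 0 - f k := by
        intro k
        induction k with
        | zero => simp
        | succ k ih =>
          intro hk
          have h1 : (Finset.range (k+1)).gcd r ∣ f 0 - f k :=
            (Finset.gcd_mono (Finset.range_subset_range.mpr (Nat.le_succ k))).trans (ih (by omega))
          have h2 : (Finset.range (k+1)).gcd r ∣ f k - f (k+1) :=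
            (Finset.gcd_dvd (Finset.mem_range.mpr (Nat.lt_succ_self k))).trans (he k hk)
          have := dvd_add h1 h2
          simpa using this
      have h1 : gcd (m k) ((Finset.range k).gcd r) ∣ f k := (gcd_dvd_left _ _).trans (hm k hk)
      have h2 : gcd (m k) ((Finset.range k).gcd r) ∣ f 0 - f k :=
        (gcd_dvd_right _ _).trans (C1 k hk)
      have h3 := dvd_add h1 h2
      rw [← hf0]
      simpa using h3
    · apply Finset.lcm_dvd
      intro t ht
      rw [Finset.mem_Ico] at ht
      have C2 : ∀ d t, t + d + 1 = n → 1 ≤ t → (Finset.Ico t n).gcd r ∣ f t - f 0 := by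
        intro d
        induction d with
        | zero =>
          intro t htn _
          have ht' : t = n - 1 := by omega
          subst ht'
          rw [hsing, Finset.gcd_singleton, normalize_dvd_iff]
          exact hw
        | succ d ih =>
          intro t htn ht1
          have h1 : (Finset.Ico t n).gcd r ∣ f (t+1) - f 0 :=
            (Finset.gcd_mono (Finset.Ico_subset_Ico (Nat.le_succ t) le_rfl)).trans
              (ih (t+1) (by omega) (by omega))
          have h2 : (Finset.Ico t n).gcd r ∣ f t - f (t+1) :=
            (Finset.gcd_dvd (Finset.mem_Ico.mpr ⟨le_rfl, by omega⟩)).trans (he t (by omega))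
          have := dvd_add h2 h1
          simpa using this
      have h1 : gcd (m t) ((Finset.Ico t n).gcd r) ∣ f t := (gcd_dvd_left _ _).trans (hm t ht.2)
      have h2 : gcd (m t) ((Finset.Ico t n).gcd r) ∣ f t - f 0 :=
        (gcd_dvd_right _ _).trans (C2 (n - 1 - t) t (by omega) ht.1)
      have h3 := dvd_sub h1 h2
      rw [← hf0]
      simpa using h3
  · intro hdvd
    set L := lcm ((Finset.range n).lcm (fun k => gcd (m k) ((Finset.range k).gcd r)))
      ((Finset.Ico 1 n).lcm (fun t => gcd (m t) ((Finset.Ico t n).gcd r))) with hLdef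
    have hFL1 : ∀ k, k < n → gcd (m k) ((Finset.range k).gcd r) ∣ L := by
      intro k hk
      rw [hLdef]
      exact (Finset.dvd_lcm (Finset.mem_range.mpr hk)).trans (dvd_lcm_left _ _)
    have hFL2 : ∀ t, 1 ≤ t → t < n → gcd (m t) ((Finset.Ico t n).gcd r) ∣ L := by
      intro t h1 h2
      rw [hLdef]
      exact (Finset.dvd_lcm (Finset.mem_Ico.mpr ⟨h1, h2⟩)).trans (dvd_lcm_right _ _)
    have key : ∀ j, j < n → ∃ f : ℕ → ℤ, f 0 = L ∧ (∀ i, i ≤ j → m i ∣ f i) ∧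
        (∀ i, i < j → r i ∣ f i - f (i+1)) ∧
        (∀ k, j < k → k < n → gcd (m k) ((Finset.Ico j k).gcd r) ∣ f j) ∧
        ((Finset.Ico j n).gcd r ∣ f j - L) := by
      intro j
      induction j with
      | zero =>
        intro _
        refine ⟨fun _ => L, rfl, ?_, fun i hi => absurd hi (Nat.not_lt_zero i), ?_, by simp⟩
        · intro i hi
          have hi0 : i = 0 := Nat.le_zero.mp hi
          subst hi0
          show m 0 ∣ L
          exact (dvd_gcd dvd_rfl (dvd_zero _)).trans
            (by simpa using hFL1 0 (by omega))
        · intro k hk0 hkn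
          show gcd (m k) ((Finset.Ico 0 k).gcd r) ∣ L
          rw [← Finset.range_eq_Ico]
          exact hFL1 k hkn
      | succ j ih =>
        intro hj1
        obtain ⟨f, hf0, H1, H2, H3, H4⟩ := ih (by omega)
        have hIco : Finset.Ico j (j+1) = {j} := Nat.Ico_succ_singleton j
        have h1 : gcd (lcm (m (j+1)) ((Finset.Ioo (j+1) n).lcm
            fun k => gcd (m k) ((Finset.Ico (j+1) k).gcd r))) (r j) ∣ f j := by
          apply int_gcd_lcm_dvd
          · refine dvd_trans ?_ (H3 (j+1) (Nat.lt_succ_self j) hj1)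
            rw [hIco, Finset.gcd_singleton]
            exact dvd_gcd (gcd_dvd_left _ _) (dvd_normalize_iff.mpr (gcd_dvd_right _ _))
          · apply int_gcd_finset_lcm_dvd
            intro k hk
            rw [Finset.mem_Ioo] at hk
            refine dvd_trans ?_ (H3 k (by omega) hk.2)
            refine dvd_gcd ((gcd_dvd_left _ _).trans (gcd_dvd_left _ _)) ?_
            refine Finset.dvd_gcd fun i hi => ?_
            rw [Finset.mem_Ico] at hi
            rcases eq_or_lt_of_le hi.1 with h | h
            · exact h ▸ gcd_dvd_right _ _
            · exact ((gcd_dvd_left _ _).trans (gcd_dvd_right _ _)).trans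
                (Finset.gcd_dvd (Finset.mem_Ico.mpr ⟨by omega, hi.2⟩))
        have h2 : gcd (lcm (m (j+1)) ((Finset.Ioo (j+1) n).lcm
            fun k => gcd (m k) ((Finset.Ico (j+1) k).gcd r)))
            ((Finset.Ico (j+1) n).gcd r) ∣ L := by
          apply int_gcd_lcm_dvd
          · exact hFL2 (j+1) (by omega) hj1
          · apply int_gcd_finset_lcm_dvd
            intro k hk
            rw [Finset.mem_Ioo] at hk
            refine dvd_trans ?_ (hFL2 k (by omega) hk.2)
            refine dvd_gcd ((gcd_dvd_left _ _).trans (gcd_dvd_left _ _)) ?_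
            refine Finset.dvd_gcd fun i hi => ?_
            rw [Finset.mem_Ico] at hi
            exact (gcd_dvd_right _ _).trans
              (Finset.gcd_dvd (Finset.mem_Ico.mpr ⟨by omega, hi.2⟩))
        have h3 : gcd (r j) ((Finset.Ico (j+1) n).gcd r) ∣ f j - L := by
          refine dvd_trans ?_ H4
          refine Finset.dvd_gcd fun i hi => ?_
          rw [Finset.mem_Ico] at hi
          rcases eq_or_lt_of_le hi.1 with h | h
          · exact h ▸ gcd_dvd_left _ _
          · exact (gcd_dvd_right _ _).trans
              (Finset.gcd_dvd (Finset.mem_Ico.mpr ⟨by omega, hi.2⟩))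
        obtain ⟨x, hx1, hx2, hx3⟩ := crt3 _ (r j) _ (f j) L h1 h2 h3
        refine ⟨Function.update f (j+1) x, ?_, ?_, ?_, ?_, ?_⟩
        · rw [Function.update_of_ne (by omega)]
          exact hf0
        · intro i hi
          rcases eq_or_lt_of_le hi with h | h
          · subst h
            rw [Function.update_self]
            exact (dvd_lcm_left _ _).trans hx1
          · rw [Function.update_of_ne (by omega)]
            exact H1 i (by omega)
        · intro i hi
          rcases Nat.lt_succ_iff_lt_or_eq.mp hi with h | h
          · rw [Function.update_of_ne (by omega), Function.update_of_ne (by omega)]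
            exact H2 i h
          · subst h
            rw [Function.update_of_ne (by omega), Function.update_self]
            exact dvd_sub_comm.mp hx2
        · intro k hk1 hk2
          rw [Function.update_self]
          exact ((Finset.dvd_lcm (Finset.mem_Ioo.mpr ⟨hk1, hk2⟩)).trans
            (dvd_lcm_right _ _)).trans hx1
        · rw [Function.update_self]
          exact hx3
    obtain ⟨f, hf0, H1, H2, H3, H4⟩ := key (n-1) (by omega)
    obtain ⟨c, hc⟩ := hdvd
    refine ⟨fun i => f i * c, ?_, ?_, ?_, ?_⟩
    · show f 0 * c = a
      rw [hf0]; exact hc.symm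
    · intro i hi
      exact (H1 i (by omega)).mul_right c
    · intro i hi
      have := H2 i (by omega)
      show r i ∣ f i * c - f (i+1) * c
      rw [← sub_mul]
      exact this.mul_right c
    · rw [hsing, Finset.gcd_singleton, normalize_dvd_iff] at H4
      show r (n-1) ∣ f (n-1) * c - f 0 * c
      rw [hf0, ← sub_mul]
      exact H4.mul_right c
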